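/- arXiv:1707.07878 — 3 statements merged into one kernel-verified Lean document; each statement's English description precedes it below -/
import Mathlib

section
/- Under the stated hypotheses, sup_{k∈ℤ} ‖k·(N_{k+1} − N_k)‖ < ∞, i.e. there exists a constant M > 0 such that ‖k·(N_{k+1} − N_k)‖ ≤ M for all integers k. -/
open Finset

lemma aux_pow (z : ℂ) (hz : 1 ≤ ‖z‖) {j n : ℕ} (hj : j ∈ Finset.Icc 1 n) :
    ‖z‖ * ‖(Complex.I * z) ^ j - (Complex.I * (z + 1)) ^ j‖ ≤ n * 2 ^ n * ‖z‖ ^ n := by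
  obtain ⟨hj1, hjn⟩ := Finset.mem_Icc.mp hj
  have hn1 : 1 ≤ n := le_trans hj1 hjn
  have key : (Complex.I * z) ^ j - (Complex.I * (z + 1)) ^ j
      = Complex.I ^ j * (z ^ j - (z + 1) ^ j) := by
    rw [mul_pow, mul_pow, ← mul_sub]
  rw [key, norm_mul, norm_pow, Complex.norm_I, one_pow, one_mul, norm_sub_rev]
  have h2 : (z + 1) ^ j - z ^ j = ∑ i ∈ range j, (z + 1) ^ i * z ^ (j - 1 - i) := by
    have := geom_sum₂_mul (z + 1) z j
    simpa using this.symm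
  rw [h2]
  have hbound : ‖∑ i ∈ range j, (z + 1) ^ i * z ^ (j - 1 - i)‖
      ≤ (n : ℝ) * (2 ^ n * ‖z‖ ^ (n - 1)) := by
    calc ‖∑ i ∈ range j, (z + 1) ^ i * z ^ (j - 1 - i)‖
        ≤ ∑ i ∈ range j, ‖(z + 1) ^ i * z ^ (j - 1 - i)‖ := norm_sum_le _ _
      _ ≤ ∑ _i ∈ range j, (2 : ℝ) ^ n * ‖z‖ ^ (n - 1) := by
          apply Finset.sum_le_sum
          intro i hi
          have hi' := Finset.mem_range.mp hi
          rw [norm_mul, norm_pow, norm_pow]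
          have h1 : ‖z + 1‖ ≤ 2 * ‖z‖ := by
            calc ‖z + 1‖ ≤ ‖z‖ + ‖(1 : ℂ)‖ := norm_add_le _ _
              _ ≤ ‖z‖ + ‖z‖ := by simpa using hz
              _ = 2 * ‖z‖ := by ring
          calc ‖z + 1‖ ^ i * ‖z‖ ^ (j - 1 - i)
              ≤ (2 * ‖z‖) ^ i * ‖z‖ ^ (j - 1 - i) := by
                have := pow_le_pow_left₀ (norm_nonneg _) h1 i
                exact mul_le_mul_of_nonneg_right this (by positivity)
            _ = 2 ^ i * ‖z‖ ^ (i + (j - 1 - i)) := by rw [mul_pow, pow_add]; ring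
            _ = 2 ^ i * ‖z‖ ^ (j - 1) := by
                congr 2
                omega
            _ ≤ 2 ^ n * ‖z‖ ^ (n - 1) := by
                have e1 : (2 : ℝ) ^ i ≤ 2 ^ n := pow_le_pow_right₀ (by norm_num) (by omega)
                have e2 : ‖z‖ ^ (j - 1) ≤ ‖z‖ ^ (n - 1) := pow_le_pow_right₀ hz (by omega)
                exact mul_le_mul e1 e2 (by positivity) (by positivity)
      _ = (j : ℝ) * (2 ^ n * ‖z‖ ^ (n - 1)) := by
          rw [Finset.sum_const, Finset.card_range, nsmul_eq_mul]
      _ ≤ (n : ℝ) * (2 ^ n * ‖z‖ ^ (n - 1)) := by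
          have : (j : ℝ) ≤ n := by exact_mod_cast hjn
          exact mul_le_mul_of_nonneg_right this (by positivity)
  calc ‖z‖ * ‖∑ i ∈ range j, (z + 1) ^ i * z ^ (j - 1 - i)‖
      ≤ ‖z‖ * ((n : ℝ) * (2 ^ n * ‖z‖ ^ (n - 1))) :=
        mul_le_mul_of_nonneg_left hbound (norm_nonneg _)
    _ = (n : ℝ) * 2 ^ n * (‖z‖ * ‖z‖ ^ (n - 1)) := by ring
    _ = (n : ℝ) * 2 ^ n * ‖z‖ ^ n := by
        congr 1
        rw [← pow_succ']
        congr 1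
        omega

/-- The operator `D_k := (Σ_{j=1}^{n} (ik)^{j})·I − A − L_k`. -/
noncomputable def Dop {X : Type*} [NormedAddCommGroup X] [NormedSpace ℂ X]
    (n : ℕ) (A : X →L[ℂ] X) (L : ℤ → X →L[ℂ] X) (k : ℤ) : X →L[ℂ] X :=
  (∑ j ∈ Finset.Icc 1 n, (Complex.I * (k : ℂ)) ^ (j : ℕ)) • (1 : X →L[ℂ] X) - A - L k

/-- `sup_{k∈ℤ} ‖k·(N_{k+1} − N_k)‖ < ∞`. -/
theorem N_diff_bounded {X : Type*} [NormedAddCommGroup X] [NormedSpace ℂ X] [CompleteSpace X]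
    (n : ℕ) (hn : 1 ≤ n) (A : X →L[ℂ] X) (L N : ℤ → X →L[ℂ] X)
    (hL : ∃ C : ℝ, ∀ k : ℤ, ‖L k‖ ≤ C)
    (hLdiff : ∃ C : ℝ, ∀ k : ℤ, ‖(k : ℂ) • (L (k + 1) - L k)‖ ≤ C)
    (hN : ∀ k : ℤ, N k * Dop n A L k = 1 ∧ Dop n A L k * N k = 1)
    (hNbdd : ∃ C : ℝ, ∀ k : ℤ, ‖N k‖ ≤ C)
    (hSbdd : ∃ C : ℝ, ∀ k : ℤ, ‖((Complex.I * (k : ℂ)) ^ (n : ℕ)) • N k‖ ≤ C) :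
    ∃ M > (0 : ℝ), ∀ k : ℤ, ‖(k : ℂ) • (N (k + 1) - N k)‖ ≤ M := by
  obtain ⟨CL, hCL⟩ := hLdiff
  obtain ⟨CN, hCN⟩ := hNbdd
  obtain ⟨CS, hCS⟩ := hSbdd
  have hCN0 : 0 ≤ CN := le_trans (norm_nonneg _) (hCN 0)
  have hCS0 : 0 ≤ CS := le_trans (norm_nonneg _) (hCS 0)
  have hCL0 : 0 ≤ CL := le_trans (norm_nonneg _) (hCL 0)
  refine ⟨CN * ((n : ℝ) * (n : ℝ) * 2 ^ n * CS) + CN * CL * CN + 1, by positivity, fun k => ?_⟩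
  rcases eq_or_ne k 0 with rfl | hk0
  · simp
    positivity
  · -- main case
    have hz : (1 : ℝ) ≤ ‖(k : ℂ)‖ := by
      rw [Complex.norm_intCast]
      exact_mod_cast Int.one_le_abs hk0
    have hid : N (k+1) - N k = N (k+1) * (Dop n A L k - Dop n A L (k+1)) * N k := by
      calc N (k+1) - N k
          = N (k+1) * (Dop n A L k * N k) - (N (k+1) * Dop n A L (k+1)) * N k := by
            rw [(hN k).2, (hN (k+1)).1, mul_one, one_mul]
        _ = _ := by noncomm_ring
    have hD : Dop n A L k - Dop n A L (k+1)
        = (∑ j ∈ Finset.Icc 1 n, ((Complex.I * (k:ℂ))^j - (Complex.I * ((k:ℂ)+1))^j))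
            • (1 : X →L[ℂ] X) + (L (k+1) - L k) := by
      simp only [Dop, Finset.sum_sub_distrib, sub_smul]
      push_cast
      abel
    have hsplit : (k:ℂ) • (N (k+1) - N k)
        = N (k+1) * ((((k:ℂ) * ∑ j ∈ Finset.Icc 1 n,
              ((Complex.I * (k:ℂ))^j - (Complex.I * ((k:ℂ)+1))^j)) • N k))
          + N (k+1) * ((k:ℂ) • (L (k+1) - L k)) * N k := by
      rw [hid, hD]
      simp only [mul_add, add_mul, smul_add, mul_smul_comm, smul_mul_assoc, smul_smul, mul_one]
    -- bound the scalar
    set c : ℂ := (k:ℂ) * ∑ j ∈ Finset.Icc 1 n,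
        ((Complex.I * (k:ℂ))^j - (Complex.I * ((k:ℂ)+1))^j) with hc
    have hcbound : ‖c‖ ≤ (n : ℝ) * (n : ℝ) * 2 ^ n * ‖(k : ℂ)‖ ^ n := by
      rw [hc, norm_mul]
      calc ‖(k:ℂ)‖ * ‖∑ j ∈ Finset.Icc 1 n,
              ((Complex.I * (k:ℂ))^j - (Complex.I * ((k:ℂ)+1))^j)‖
          ≤ ‖(k:ℂ)‖ * ∑ j ∈ Finset.Icc 1 n,
              ‖(Complex.I * (k:ℂ))^j - (Complex.I * ((k:ℂ)+1))^j‖ :=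
            mul_le_mul_of_nonneg_left (norm_sum_le _ _) (norm_nonneg _)
        _ = ∑ j ∈ Finset.Icc 1 n, ‖(k:ℂ)‖ *
              ‖(Complex.I * (k:ℂ))^j - (Complex.I * ((k:ℂ)+1))^j‖ := Finset.mul_sum _ _ _
        _ ≤ ∑ _j ∈ Finset.Icc 1 n, (n : ℝ) * 2 ^ n * ‖(k : ℂ)‖ ^ n :=
            Finset.sum_le_sum (fun j hj => aux_pow (k : ℂ) hz hj)
        _ = (n : ℝ) * ((n : ℝ) * 2 ^ n * ‖(k : ℂ)‖ ^ n) := by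
            rw [Finset.sum_const, Nat.card_Icc, nsmul_eq_mul]
            norm_num
        _ = (n : ℝ) * (n : ℝ) * 2 ^ n * ‖(k : ℂ)‖ ^ n := by ring
    -- norm of scalar part
    have hSnorm : ‖(k : ℂ)‖ ^ n * ‖N k‖ = ‖((Complex.I * (k : ℂ)) ^ n) • N k‖ := by
      rw [norm_smul ((Complex.I * (k:ℂ)) ^ n) (N k), norm_pow, norm_mul, Complex.norm_I,
        one_mul]
    have hpart1 : ‖N (k+1) * (c • N k)‖ ≤ CN * ((n : ℝ) * (n : ℝ) * 2 ^ n * CS) := by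
      calc ‖N (k+1) * (c • N k)‖ ≤ ‖N (k+1)‖ * ‖c • N k‖ := norm_mul_le _ _
        _ ≤ CN * (‖c‖ * ‖N k‖) := by
            rw [norm_smul c (N k)]
            exact mul_le_mul (hCN _) le_rfl (by positivity) hCN0
        _ ≤ CN * ((n : ℝ) * (n : ℝ) * 2 ^ n * (‖(k : ℂ)‖ ^ n * ‖N k‖)) := by
            apply mul_le_mul_of_nonneg_left _ hCN0
            calc ‖c‖ * ‖N k‖ ≤ ((n : ℝ) * (n : ℝ) * 2 ^ n * ‖(k : ℂ)‖ ^ n) * ‖N k‖ :=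
                  mul_le_mul_of_nonneg_right hcbound (norm_nonneg _)
              _ = (n : ℝ) * (n : ℝ) * 2 ^ n * (‖(k : ℂ)‖ ^ n * ‖N k‖) := by ring
        _ ≤ CN * ((n : ℝ) * (n : ℝ) * 2 ^ n * CS) := by
            apply mul_le_mul_of_nonneg_left _ hCN0
            apply mul_le_mul_of_nonneg_left _ (by positivity)
            rw [hSnorm]
            exact hCS k
    have hpart2 : ‖N (k+1) * ((k:ℂ) • (L (k + 1) - L k)) * N k‖ ≤ CN * CL * CN := by
      calc ‖N (k+1) * ((k:ℂ) • (L (k + 1) - L k)) * N k‖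
          ≤ ‖N (k+1) * ((k:ℂ) • (L (k + 1) - L k))‖ * ‖N k‖ := norm_mul_le _ _
        _ ≤ ‖N (k+1)‖ * ‖(k:ℂ) • (L (k + 1) - L k)‖ * ‖N k‖ :=
            mul_le_mul_of_nonneg_right (norm_mul_le _ _) (norm_nonneg _)
        _ ≤ CN * CL * CN := by
            apply mul_le_mul (mul_le_mul (hCN _) (hCL k) (norm_nonneg _) hCN0)
              (hCN k) (norm_nonneg _) (by positivity)
    calc ‖(k : ℂ) • (N (k + 1) - N k)‖
        = ‖N (k+1) * (c • N k) + N (k+1) * ((k:ℂ) • (L (k + 1) - L k)) * N k‖ := by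
          rw [hsplit]
      _ ≤ ‖N (k+1) * (c • N k)‖ + ‖N (k+1) * ((k:ℂ) • (L (k + 1) - L k)) * N k‖ :=
          norm_add_le _ _
      _ ≤ CN * ((n : ℝ) * (n : ℝ) * 2 ^ n * CS) + CN * CL * CN := add_le_add hpart1 hpart2
      _ ≤ CN * ((n : ℝ) * (n : ℝ) * 2 ^ n * CS) + CN * CL * CN + 1 := by linarith
end

section
/- Under the stated hypotheses, sup_{k∈ℤ} ‖k·(S_{k+1} − S_k)‖ < ∞, i.e. there exists a constant M > 0 such that ‖k·((i(k+1))^{n}·N_{k+1} − (ik)^{n}·N_k)‖ ≤ M for all integers k. -/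
/-!
By the resolvent identity `N_{k+1} - N_k = N_{k+1} (D_k - D_{k+1}) N_k`,
`k (S_{k+1} - S_k) = k ((i(k+1))^n - (ik)^n) N_{k+1} - N_{k+1} (k (D_{k+1} - D_k)) S_k`,
and `k (D_{k+1} - D_k)` is `k (P(i(k+1)) - P(ik))` times the identity, with `P(z) = z + ⋯ + z^n`,
minus `k (L_{k+1} - L_k)`. The scalar factors `k (w^j - z^j)` with `z = ik`, `w = i(k+1)`,
`j ≤ n`, are `O(|w|^n + 1)`, and `(|w|^n + 1) ‖N_{k+1}‖ = ‖S_{k+1}‖ + ‖N_{k+1}‖` is bounded.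
-/

open Finset

section NormedField

variable {𝕜 : Type*} [NormedField 𝕜]

theorem norm_pow_sub_pow_le (a b : 𝕜) (m : ℕ) :
    ‖b ^ m - a ^ m‖ ≤ m * max ‖a‖ ‖b‖ ^ (m - 1) * ‖b - a‖ := by
  rw [← geom_sum₂_mul, norm_mul]
  gcongr
  calc ‖∑ i ∈ range m, b ^ i * a ^ (m - 1 - i)‖
      ≤ ∑ i ∈ range m, ‖b ^ i * a ^ (m - 1 - i)‖ := norm_sum_le _ _
    _ ≤ ∑ _i ∈ range m, max ‖a‖ ‖b‖ ^ (m - 1) := by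
        refine sum_le_sum fun i hi => ?_
        rw [norm_mul, norm_pow, norm_pow,
          ← pow_mul_pow_sub _ (Nat.le_sub_one_of_lt (mem_range.mp hi))]
        gcongr
        exacts [le_max_right _ _, le_max_left _ _]
    _ = m * max ‖a‖ ‖b‖ ^ (m - 1) := by rw [sum_const, card_range, nsmul_eq_mul]

theorem norm_mul_pow_sub_pow_le {a b c : 𝕜} (hba : ‖b - a‖ ≤ 1) (hc : ‖c‖ ≤ ‖b‖ + 1) (m : ℕ) :
    ‖c * (b ^ m - a ^ m)‖ ≤ m * (‖b‖ + 1) ^ m := by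
  obtain _ | m := m
  · simp
  have hmax : max ‖a‖ ‖b‖ ≤ ‖b‖ + 1 := by
    refine max_le ?_ (by linarith)
    linarith [norm_le_norm_add_norm_sub' a b, norm_sub_rev a b]
  calc ‖c * (b ^ (m + 1) - a ^ (m + 1))‖
      ≤ (‖b‖ + 1) * ((m + 1 : ℕ) * (‖b‖ + 1) ^ m * 1) := by
        rw [norm_mul]
        gcongr
        refine (norm_pow_sub_pow_le a b (m + 1)).trans ?_
        rw [Nat.add_sub_cancel]
        gcongr
    _ = (m + 1 : ℕ) * (‖b‖ + 1) ^ (m + 1) := by ring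

theorem add_one_pow_le_two_pow_mul {r : ℝ} (hr : 0 ≤ r) {j n : ℕ} (hjn : j ≤ n) :
    (r + 1) ^ j ≤ 2 ^ j * (r ^ n + 1) := by
  rcases le_total r 1 with hr1 | hr1
  · calc (r + 1) ^ j ≤ 2 ^ j * 1 := by rw [mul_one]; gcongr; linarith
      _ ≤ 2 ^ j * (r ^ n + 1) := by gcongr; linarith [pow_nonneg hr n]
  · calc (r + 1) ^ j ≤ (2 * r) ^ j := by gcongr; linarith
      _ = 2 ^ j * r ^ j := mul_pow _ _ _
      _ ≤ 2 ^ j * (r ^ n + 1) := by gcongr; linarith [pow_le_pow_right₀ hr1 hjn]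

theorem norm_mul_pow_sub_pow_le_of_le {a b c : 𝕜} (hba : ‖b - a‖ ≤ 1) (hc : ‖c‖ ≤ ‖b‖ + 1)
    {j n : ℕ} (hjn : j ≤ n) :
    ‖c * (b ^ j - a ^ j)‖ ≤ j * 2 ^ j * (‖b‖ ^ n + 1) := by
  calc ‖c * (b ^ j - a ^ j)‖ ≤ j * (‖b‖ + 1) ^ j := norm_mul_pow_sub_pow_le hba hc j
    _ ≤ j * (2 ^ j * (‖b‖ ^ n + 1)) := by
        gcongr
        exact add_one_pow_le_two_pow_mul (norm_nonneg b) hjn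
    _ = j * 2 ^ j * (‖b‖ ^ n + 1) := by ring

theorem norm_mul_sum_pow_sub_sum_pow_le {a b c : 𝕜} (hba : ‖b - a‖ ≤ 1) (hc : ‖c‖ ≤ ‖b‖ + 1)
    (n : ℕ) :
    ‖c * (∑ j ∈ Icc 1 n, b ^ j - ∑ j ∈ Icc 1 n, a ^ j)‖
      ≤ (∑ j ∈ Icc 1 n, (j : ℝ) * 2 ^ j) * (‖b‖ ^ n + 1) := by
  rw [← sum_sub_distrib, mul_sum, sum_mul]
  refine (norm_sum_le _ _).trans (sum_le_sum fun j hj => ?_)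
  exact norm_mul_pow_sub_pow_le_of_le hba hc (mem_Icc.mp hj).2

theorem norm_smul_le_mul_norm_pow_smul_add_norm {E : Type*} [SeminormedAddCommGroup E]
    [NormedSpace 𝕜 E] {b c : 𝕜} {n : ℕ} {K : ℝ} (hc : ‖c‖ ≤ K * (‖b‖ ^ n + 1)) (x : E) :
    ‖c • x‖ ≤ K * (‖b ^ n • x‖ + ‖x‖) := by
  rw [norm_smul, norm_smul, norm_pow]
  calc ‖c‖ * ‖x‖ ≤ K * (‖b‖ ^ n + 1) * ‖x‖ := by gcongr
    _ = K * (‖b‖ ^ n * ‖x‖ + ‖x‖) := by ring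

end NormedField

theorem smul_sub_smul_eq_of_mul_eq_one {𝕜 R : Type*} [CommRing 𝕜] [Ring R] [Algebra 𝕜 R]
    {u v d d' : R} (hu : u * d' = 1) (hv : d * v = 1) (c α β : 𝕜) :
    c • (β • u - α • v) = (c * (β - α)) • u - u * (c • (d' - d)) * (α • v) := by
  have hres : u * (d' - d) * v = v - u := by
    rw [mul_sub, sub_mul, hu, mul_assoc, hv, one_mul, mul_one]
  simp only [mul_smul_comm, smul_mul_assoc, hres]
  module

theorem Dop_succ_sub_Dop {X : Type*} [NormedAddCommGroup X] [NormedSpace ℂ X]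
    (n : ℕ) (A : X →L[ℂ] X) (L : ℤ → X →L[ℂ] X) (k : ℤ) :
    Dop n A L (k + 1) - Dop n A L k
      = (∑ j ∈ Icc 1 n, (Complex.I * (k + 1)) ^ j - ∑ j ∈ Icc 1 n, (Complex.I * k) ^ j) • 1
        - (L (k + 1) - L k) := by
  simp only [Dop]
  push_cast
  module

theorem S_diff_bounded_general {X : Type*} [NormedAddCommGroup X] [NormedSpace ℂ X]
    (n : ℕ) (A : X →L[ℂ] X) (L N : ℤ → X →L[ℂ] X)
    (hLdiff : ∃ C : ℝ, ∀ k : ℤ, ‖(k : ℂ) • (L (k + 1) - L k)‖ ≤ C)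
    (hN : ∀ k : ℤ, N k * Dop n A L k = 1 ∧ Dop n A L k * N k = 1)
    (hNbdd : ∃ C : ℝ, ∀ k : ℤ, ‖N k‖ ≤ C)
    (hSbdd : ∃ C : ℝ, ∀ k : ℤ, ‖((Complex.I * (k : ℂ)) ^ (n : ℕ)) • N k‖ ≤ C) :
    ∃ M > (0 : ℝ), ∀ k : ℤ,
      ‖(k : ℂ) • (((Complex.I * ((k : ℂ) + 1)) ^ (n : ℕ)) • N (k + 1)
          - ((Complex.I * (k : ℂ)) ^ (n : ℕ)) • N k)‖ ≤ M := by
  obtain ⟨CL, hCL⟩ := hLdiff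
  obtain ⟨CN, hCN⟩ := hNbdd
  obtain ⟨CS, hCS⟩ := hSbdd
  set K : ℝ := ∑ j ∈ Icc 1 n, (j : ℝ) * 2 ^ j
  refine ⟨max 1 (n * 2 ^ n * (CS + CN) + (K * (CS + CN) + CN * CL) * CS), by positivity,
    fun k => le_trans ?_ (le_max_right _ _)⟩
  set a := Complex.I * k
  set b := Complex.I * (k + 1)
  have hba : ‖b - a‖ ≤ 1 := by simp [a, b, ← mul_sub]
  have hk : ‖(k : ℂ)‖ ≤ ‖b‖ + 1 := by
    simpa [b] using norm_le_norm_add_norm_sub' (k : ℂ) (k + 1)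
  have hSk : ‖b ^ n • N (k + 1)‖ ≤ CS := by simpa using hCS (k + 1)
  have hpow : ‖((k : ℂ) * (b ^ n - a ^ n)) • N (k + 1)‖ ≤ n * 2 ^ n * (CS + CN) := by
    refine (norm_smul_le_mul_norm_pow_smul_add_norm
      (norm_mul_pow_sub_pow_le_of_le hba hk le_rfl) (N (k + 1))).trans ?_
    gcongr
    exact hCN _
  have hDop : ‖N (k + 1) * ((k : ℂ) • (Dop n A L (k + 1) - Dop n A L k))‖
      ≤ K * (CS + CN) + CN * CL := by
    rw [Dop_succ_sub_Dop, smul_sub, smul_smul, mul_sub, mul_smul_comm, mul_one]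
    refine (norm_sub_le _ _).trans (add_le_add ?_ ((norm_mul_le _ _).trans ?_))
    · exact (norm_smul_le_mul_norm_pow_smul_add_norm
        (norm_mul_sum_pow_sub_sum_pow_le hba hk n) (N (k + 1))).trans (by gcongr; exact hCN _)
    · gcongr
      exacts [(norm_nonneg _).trans (hCN 0), hCN _, hCL k]
  rw [smul_sub_smul_eq_of_mul_eq_one (hN (k + 1)).1 (hN k).2]
  calc _ ≤ _ := (norm_sub_le _ _).trans (add_le_add le_rfl (norm_mul_le _ _))
    _ ≤ _ := add_le_add hpow
      (mul_le_mul hDop (hCS k) (norm_nonneg _) ((norm_nonneg _).trans hDop))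

/-- `sup_{k∈ℤ} ‖k·(S_{k+1} − S_k)‖ < ∞` where `S_k = (ik)^n·N_k`. -/
theorem S_diff_bounded {X : Type*} [NormedAddCommGroup X] [NormedSpace ℂ X] [CompleteSpace X]
    (n : ℕ) (hn : 1 ≤ n) (A : X →L[ℂ] X) (L N : ℤ → X →L[ℂ] X)
    (hL : ∃ C : ℝ, ∀ k : ℤ, ‖L k‖ ≤ C)
    (hLdiff : ∃ C : ℝ, ∀ k : ℤ, ‖(k : ℂ) • (L (k + 1) - L k)‖ ≤ C)
    (hN : ∀ k : ℤ, N k * Dop n A L k = 1 ∧ Dop n A L k * N k = 1)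
    (hNbdd : ∃ C : ℝ, ∀ k : ℤ, ‖N k‖ ≤ C)
    (hSbdd : ∃ C : ℝ, ∀ k : ℤ, ‖((Complex.I * (k : ℂ)) ^ (n : ℕ)) • N k‖ ≤ C) :
    ∃ M > (0 : ℝ), ∀ k : ℤ,
      ‖(k : ℂ) • (((Complex.I * ((k : ℂ) + 1)) ^ (n : ℕ)) • N (k + 1)
          - ((Complex.I * (k : ℂ)) ^ (n : ℕ)) • N k)‖ ≤ M :=
  S_diff_bounded_general n A L N hLdiff hN hNbdd hSbdd
end

section
/- Under the stated hypotheses, sup_{k∈ℤ} ‖k·(T_{k+1} − T_k)‖ < ∞, i.e. there exists a constant M > 0 such that ‖k·(L_{k+1}·N_{k+1} − L_k·N_k)‖ ≤ M for all integers k. -/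
/-!
By the resolvent identity, `N (k+1) - N k = N (k+1) * (D k - D (k+1)) * N k`, and
`D k - D (k+1)` is the scalar `p (i k) - p (i k + i)`, with `p z = z + ⋯ + z ^ n`, plus
`L (k+1) - L k`. Multiplied by `k`, that scalar is `O(|k| ^ n)`, which `N k` absorbs because
both `N k` and `(i k) ^ n • N k` are bounded. Hence `k • (N (k+1) - N k)` is bounded, and the
product rule `k • (L' N' - L N) = k • (L' - L) * N' + L * k • (N' - N)` bounds `k • (T (k+1) - T k)`.
-/

open Finset

open Asymptotics Filter Complex

/-- The symbol of `∑_{j=1}^n (d/dt)^j`; `Dop n A L k` is `diffSymbol n (I * k) • 1 - A - L k`. -/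
def diffSymbol {R : Type*} [Semiring R] (n : ℕ) (z : R) : R :=
  ∑ j ∈ Icc 1 n, z ^ j

theorem isBigO_top_one_iff {α E : Type*} [Norm E] {f : α → E} :
    f =O[⊤] (fun _ ↦ (1 : ℝ)) ↔ ∃ C, ∀ x, ‖f x‖ ≤ C := by
  simp only [isBigO_top, norm_one, mul_one]

theorem sub_eq_mul_sub_mul_of_mul_eq_one {R : Type*} [Ring R] {a a' d d' : R}
    (hda : d * a = 1) (ha'd' : a' * d' = 1) : a' - a = a' * (d - d') * a := by
  rw [mul_sub, sub_mul, mul_assoc, hda, ha'd', mul_one, one_mul]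

theorem smul_mul_sub_mul {𝕜 R : Type*} [CommRing 𝕜] [Ring R] [Algebra 𝕜 R]
    (c : 𝕜) (a a' b b' : R) :
    c • (a' * b' - a * b) = (c • (a' - a)) * b' + a * (c • (b' - b)) := by
  simp only [smul_sub, sub_mul, mul_sub, smul_mul_assoc, mul_smul_comm]
  abel

theorem Asymptotics.IsBigO.mul_of_one {α R : Type*} [SeminormedRing R] {l : Filter α}
    {f g : α → R} (hf : f =O[l] (fun _ ↦ (1 : ℝ))) (hg : g =O[l] (fun _ ↦ (1 : ℝ))) :
    (fun x ↦ f x * g x) =O[l] (fun _ ↦ (1 : ℝ)) := by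
  simpa using hf.mul hg

section NormedCommRing

variable {R : Type*} [NormedCommRing R] [NormOneClass R]

theorem norm_add_pow_sub_pow_le (a b : R) (j : ℕ) :
    ‖(a + b) ^ j - a ^ j‖ ≤ j * ‖b‖ * (‖a‖ + ‖b‖) ^ (j - 1) := by
  rw [← geom_sum₂_mul, add_sub_cancel_left]
  calc ‖(∑ i ∈ range j, (a + b) ^ i * a ^ (j - 1 - i)) * b‖
      ≤ (∑ i ∈ range j, (‖a‖ + ‖b‖) ^ (j - 1)) * ‖b‖ := by
        refine (norm_mul_le _ _).trans (mul_le_mul_of_nonneg_right ?_ (norm_nonneg b))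
        refine norm_sum_le_of_le _ fun i hi ↦ (norm_mul_le _ _).trans ?_
        rw [← Nat.add_sub_of_le (Nat.le_sub_one_of_lt (mem_range.1 hi)), pow_add,
          Nat.add_sub_cancel_left]
        gcongr
        · exact (norm_pow_le _ _).trans (pow_le_pow_left₀ (norm_nonneg _) (norm_add_le _ _) _)
        · exact (norm_pow_le _ _).trans (pow_le_pow_left₀ (norm_nonneg _) (by simp) _)
    _ = j * ‖b‖ * (‖a‖ + ‖b‖) ^ (j - 1) := by
        rw [sum_const, card_range, nsmul_eq_mul]; ring

theorem norm_mul_norm_diffSymbol_add_sub_le (n : ℕ) (a : R) {b : R} (hb : ‖b‖ ≤ 1) :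
    ‖a‖ * ‖diffSymbol n (a + b) - diffSymbol n a‖ ≤ n ^ 2 * (‖a‖ + 1) ^ n := by
  have hterm : ∀ j ∈ Icc 1 n, ‖a‖ * ‖(a + b) ^ j - a ^ j‖ ≤ n * (‖a‖ + 1) ^ n := by
    intro j hj
    obtain ⟨hj1, hjn⟩ := mem_Icc.1 hj
    calc ‖a‖ * ‖(a + b) ^ j - a ^ j‖ ≤ (‖a‖ + 1) * (j * (‖a‖ + 1) ^ (j - 1)) := by
          gcongr
          · linarith
          · refine (norm_add_pow_sub_pow_le a b j).trans ?_
            rw [mul_assoc]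
            gcongr
            calc ‖b‖ * (‖a‖ + ‖b‖) ^ (j - 1) ≤ (‖a‖ + ‖b‖) ^ (j - 1) :=
                  mul_le_of_le_one_left (by positivity) hb
              _ ≤ (‖a‖ + 1) ^ (j - 1) := by gcongr
      _ = j * (‖a‖ + 1) ^ j := by rw [mul_left_comm, ← pow_succ', Nat.sub_add_cancel hj1]
      _ ≤ n * (‖a‖ + 1) ^ n := by
          gcongr
          linarith [norm_nonneg a]
  calc ‖a‖ * ‖diffSymbol n (a + b) - diffSymbol n a‖
      ≤ ∑ j ∈ Icc 1 n, ‖a‖ * ‖(a + b) ^ j - a ^ j‖ := by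
        rw [diffSymbol, diffSymbol, ← sum_sub_distrib, ← mul_sum]
        gcongr
        exact norm_sum_le _ _
    _ ≤ n ^ 2 * (‖a‖ + 1) ^ n := by
        refine (sum_le_card_nsmul _ _ _ hterm).trans_eq ?_
        rw [Nat.card_Icc, nsmul_eq_mul]; push_cast; ring

end NormedCommRing

section Dop

variable {X : Type*} [NormedAddCommGroup X] [NormedSpace ℂ X]

theorem Dop_sub_Dop_add_one (n : ℕ) (A : X →L[ℂ] X) (L : ℤ → X →L[ℂ] X) (k : ℤ) :
    Dop n A L k - Dop n A L (k + 1) =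
      (diffSymbol n (I * k) - diffSymbol n (I * (k + 1))) • (1 : X →L[ℂ] X) +
        (L (k + 1) - L k) := by
  simp only [Dop, diffSymbol, sub_smul, Int.cast_add, Int.cast_one]
  abel

theorem smul_sub_of_mul_Dop_eq_one {n : ℕ} {A : X →L[ℂ] X} {L N : ℤ → X →L[ℂ] X}
    (hN : ∀ k, N k * Dop n A L k = 1 ∧ Dop n A L k * N k = 1) (k : ℤ) :
    (k : ℂ) • (N (k + 1) - N k) =
      N (k + 1) * (((k : ℂ) * (diffSymbol n (I * k) - diffSymbol n (I * (k + 1)))) • N k +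
        ((k : ℂ) • (L (k + 1) - L k)) * N k) := by
  rw [sub_eq_mul_sub_mul_of_mul_eq_one (hN k).2 (hN (k + 1)).1, Dop_sub_Dop_add_one]
  simp only [add_mul, mul_add, smul_mul_assoc, mul_smul_comm, mul_one, mul_assoc, smul_add,
    smul_smul]

theorem isBigO_mul_diffSymbol_sub_smul {n : ℕ} {N : ℤ → X →L[ℂ] X}
    (hN : N =O[⊤] (fun _ ↦ (1 : ℝ)))
    (hS : (fun k : ℤ ↦ (I * k) ^ n • N k) =O[⊤] (fun _ ↦ (1 : ℝ))) :
    (fun k : ℤ ↦ ((k : ℂ) * (diffSymbol n (I * k) - diffSymbol n (I * (k + 1)))) • N k)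
      =O[⊤] (fun _ ↦ (1 : ℝ)) := by
  refine IsBigO.trans ?_ (hS.norm_left.add hN.norm_left)
  refine isBigO_top.2 ⟨n ^ 2 * 2 ^ (n - 1), fun k ↦ ?_⟩
  have hnorm : ‖(k : ℂ) * (diffSymbol n (I * k) - diffSymbol n (I * (k + 1)))‖ =
      ‖I * k‖ * ‖diffSymbol n (I * k + I) - diffSymbol n (I * k)‖ := by
    rw [norm_mul, norm_sub_rev, mul_add_one, norm_mul I, norm_I, one_mul]
  calc ‖((k : ℂ) * (diffSymbol n (I * k) - diffSymbol n (I * (k + 1)))) • N k‖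
      ≤ n ^ 2 * (‖I * k‖ + 1) ^ n * ‖N k‖ := by
        rw [norm_smul, hnorm]
        gcongr ?_ * _
        exact norm_mul_norm_diffSymbol_add_sub_le n _ norm_I.le
    _ ≤ n ^ 2 * (2 ^ (n - 1) * (‖I * k‖ ^ n + 1 ^ n)) * ‖N k‖ := by
        gcongr
        exact add_pow_le (norm_nonneg _) zero_le_one n
    _ = n ^ 2 * 2 ^ (n - 1) * ‖‖(I * k) ^ n • N k‖ + ‖N k‖‖ := by
        rw [norm_smul, norm_pow, Real.norm_of_nonneg (by positivity)]
        ring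

end Dop

theorem T_diff_bounded_general {X : Type*} [NormedAddCommGroup X] [NormedSpace ℂ X]
    (n : ℕ) (A : X →L[ℂ] X) (L N : ℤ → X →L[ℂ] X)
    (hL : ∃ C : ℝ, ∀ k : ℤ, ‖L k‖ ≤ C)
    (hLdiff : ∃ C : ℝ, ∀ k : ℤ, ‖(k : ℂ) • (L (k + 1) - L k)‖ ≤ C)
    (hN : ∀ k : ℤ, N k * Dop n A L k = 1 ∧ Dop n A L k * N k = 1)
    (hNbdd : ∃ C : ℝ, ∀ k : ℤ, ‖N k‖ ≤ C)
    (hSbdd : ∃ C : ℝ, ∀ k : ℤ, ‖((Complex.I * (k : ℂ)) ^ (n : ℕ)) • N k‖ ≤ C) :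
    ∃ M > (0 : ℝ), ∀ k : ℤ, ‖(k : ℂ) • (L (k + 1) * N (k + 1) - L k * N k)‖ ≤ M := by
  replace hL := isBigO_top_one_iff.2 hL
  replace hLdiff := isBigO_top_one_iff.2 hLdiff
  replace hNbdd := isBigO_top_one_iff.2 hNbdd
  have hNsucc : (fun k ↦ N (k + 1)) =O[⊤] (fun _ ↦ (1 : ℝ)) := hNbdd.comp_tendsto tendsto_top
  have hNdiff : (fun k : ℤ ↦ (k : ℂ) • (N (k + 1) - N k)) =O[⊤] (fun _ ↦ (1 : ℝ)) := by
    simp_rw [smul_sub_of_mul_Dop_eq_one hN]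
    exact hNsucc.mul_of_one
      ((isBigO_mul_diffSymbol_sub_smul hNbdd (isBigO_top_one_iff.2 hSbdd)).add (hLdiff.mul_of_one hNbdd))
  have hTdiff : (fun k : ℤ ↦ (k : ℂ) • (L (k + 1) * N (k + 1) - L k * N k)) =O[⊤]
      (fun _ ↦ (1 : ℝ)) := by
    simp_rw [smul_mul_sub_mul]
    exact (hLdiff.mul_of_one hNsucc).add (hL.mul_of_one hNdiff)
  obtain ⟨M, hM, hTdiffM⟩ := hTdiff.exists_pos
  exact ⟨M, hM, fun k ↦ by simpa using isBigOWith_top.1 hTdiffM k⟩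

/-- `sup_{k∈ℤ} ‖k·(T_{k+1} − T_k)‖ < ∞` where `T_k = L_k·N_k`. -/
theorem T_diff_bounded {X : Type*} [NormedAddCommGroup X] [NormedSpace ℂ X] [CompleteSpace X]
    (n : ℕ) (hn : 1 ≤ n) (A : X →L[ℂ] X) (L N : ℤ → X →L[ℂ] X)
    (hL : ∃ C : ℝ, ∀ k : ℤ, ‖L k‖ ≤ C)
    (hLdiff : ∃ C : ℝ, ∀ k : ℤ, ‖(k : ℂ) • (L (k + 1) - L k)‖ ≤ C)
    (hN : ∀ k : ℤ, N k * Dop n A L k = 1 ∧ Dop n A L k * N k = 1)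
    (hNbdd : ∃ C : ℝ, ∀ k : ℤ, ‖N k‖ ≤ C)
    (hSbdd : ∃ C : ℝ, ∀ k : ℤ, ‖((Complex.I * (k : ℂ)) ^ (n : ℕ)) • N k‖ ≤ C) :
    ∃ M > (0 : ℝ), ∀ k : ℤ, ‖(k : ℂ) • (L (k + 1) * N (k + 1) - L k * N k)‖ ≤ M :=
  T_diff_bounded_general n A L N hL hLdiff hN hNbdd hSbdd
end
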